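/- arXiv:2509.03343 — 4 statements merged into one kernel-verified Lean document; each statement's English description precedes it below -/
import Mathlib

section
/- Let d ≥ 1 be an integer, β ∈ (0,2] with d/β = 3/2, and let b_β : (0,∞) → (0,∞) be a strictly increasing continuous function that is regularly varying of index 1/β. Set s_β(x) := b_β(x)·x^{−1/β} and g(n) := ∑_{k=1}^n k² b_β(k)^{−2d}. Then s_β(n)^d · √(g(n)) → ∞ as n → ∞. -/
/-!
Put `B = b ^ (2d)`, regularly varying of index `2d/β = 3`; the square of the quantity is
`B(n)/n³ · ∑_{k ≤ n} k²/B(k)`. Since `B` is monotone, the dyadic block `(2^m, 2^{m+1}]` of the sum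
is at least `a(m+1)/8` with `a(m) = 2^{3m}/B(2^m)`, while `B(n)/n³ ≥ 1/(8 a(M))` for
`2^M ≤ n < 2^{M+1}`. So the square is at least `(∑_{m<M} a(m+1)) / (64 a(M))`. Finally
`a(m)/a(m+1) → 1` (`x³/B(x)` is slowly varying), so any fixed number `N` of the last terms of
`∑ a(m+1)` already add up to about `N · a(M)`.
-/

open MeasureTheory Filter Topology

noncomputable section

/-- A function `f : (0,∞) → (0,∞)` is *regularly varying of index `κ`* if
`f (c x) / f x → c ^ κ` as `x → ∞`, for every `c > 0`. -/
def RegularlyVarying (f : ℝ → ℝ) (κ : ℝ) : Prop :=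
  ∀ c : ℝ, 0 < c → Filter.Tendsto (fun x => f (c * x) / f x) Filter.atTop (nhds (c ^ κ))

open Finset

theorem RegularlyVarying.pow {f : ℝ → ℝ} {κ : ℝ} (hf : RegularlyVarying f κ) (n : ℕ) :
    RegularlyVarying (fun x => f x ^ n) (κ * n) := fun c hc => by
  simpa only [div_pow, ← Real.rpow_natCast, ← Real.rpow_mul hc.le] using (hf c hc).pow n

theorem tendsto_div_add_of_tendsto_div_succ {a : ℕ → ℝ} (ha : ∀ m, 0 < a m)
    (hratio : Tendsto (fun m => a m / a (m + 1)) atTop (𝓝 1)) (j : ℕ) :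
    Tendsto (fun m => a m / a (m + j)) atTop (𝓝 1) := by
  induction j with
  | zero => simp [div_self (ha _).ne']
  | succ j ih =>
    have h := hratio.mul (ih.comp (tendsto_add_atTop_nat 1))
    rw [one_mul] at h
    refine h.congr fun m => ?_
    simp only [Function.comp_apply, add_right_comm m 1 j, ← add_assoc]
    field_simp [(ha (m + 1)).ne']

theorem tendsto_sum_range_succ_div_atTop {a : ℕ → ℝ} (ha : ∀ m, 0 < a m)
    (hratio : Tendsto (fun m => a m / a (m + 1)) atTop (𝓝 1)) :
    Tendsto (fun M => (∑ m ∈ range M, a (m + 1)) / a M) atTop atTop := by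
  refine tendsto_atTop.2 fun C => ?_
  obtain ⟨N, hN⟩ := exists_nat_gt C
  have hwindow : Tendsto (fun M => ∑ i ∈ range N, a (M + i + 1) / a (M + N)) atTop (𝓝 N) := by
    have hterm (i) (hi : i ∈ range N) :
        Tendsto (fun M => a (M + i + 1) / a (M + N)) atTop (𝓝 1) := by
      refine ((tendsto_div_add_of_tendsto_div_succ ha hratio (N - (i + 1))).comp
        (tendsto_add_atTop_nat (i + 1))).congr fun M => ?_
      have : M + (i + 1) + (N - (i + 1)) = M + N := by
        have := mem_range.1 hi; omega
      simp [this, add_assoc]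
    simpa using tendsto_finsetSum _ hterm
  have hwindow_le (M : ℕ) : ∑ i ∈ range N, a (M + i + 1) / a (M + N) ≤
      (∑ m ∈ range (M + N), a (m + 1)) / a (M + N) := by
    rw [← sum_div, sum_range_add]
    gcongr
    · exact (ha _).le
    · exact le_add_of_nonneg_left (sum_nonneg fun m _ => (ha _).le)
  have hshifted := (tendsto_sub_atTop_nat N).eventually
    (hwindow.eventually (eventually_ge_nhds hN))
  filter_upwards [hshifted, eventually_ge_atTop N] with M hM hNM
  simpa only [Nat.sub_add_cancel hNM] using hM.trans (hwindow_le (M - N))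

theorem Finset.sum_Ioc_one_two_pow {M : Type*} [AddCommMonoid M] (f : ℕ → M) (n : ℕ) :
    ∑ k ∈ Ioc 1 (2 ^ n), f k = ∑ m ∈ range n, ∑ k ∈ Ioc (2 ^ m) (2 ^ (m + 1)), f k := by
  induction n with
  | zero => simp
  | succ n ih =>
    rw [sum_range_succ, ← ih, sum_Ioc_consecutive _ Nat.one_le_two_pow
      (Nat.pow_le_pow_right two_pos n.le_succ)]

theorem div_le_sum_Ioc_two_pow {B : ℝ → ℝ} (hB_pos : ∀ x, 0 < x → 0 < B x)
    (hB_mono : MonotoneOn B (Set.Ioi 0)) (q m : ℕ) :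
    ((2 : ℝ) ^ (m + 1)) ^ (q + 1) / B (2 ^ (m + 1)) / 2 ^ (q + 1) ≤
      ∑ k ∈ Ioc (2 ^ m : ℕ) (2 ^ (m + 1)), (k : ℝ) ^ q / B k := by
  have hcard : #(Ioc (2 ^ m : ℕ) (2 ^ (m + 1))) = 2 ^ m := by
    rw [Nat.card_Ioc, pow_succ]; omega
  have hterm : ∀ k ∈ Ioc (2 ^ m : ℕ) (2 ^ (m + 1)),
      ((2 : ℝ) ^ m) ^ q / B (2 ^ (m + 1)) ≤ (k : ℝ) ^ q / B k := by
    intro k hk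
    obtain ⟨hlo, hhi⟩ := mem_Ioc.1 hk
    have hk_pos : (0 : ℝ) < k := by exact_mod_cast (Nat.one_le_two_pow.trans_lt hlo).le
    have hBk := hB_pos k hk_pos
    gcongr
    · exact_mod_cast hlo.le
    · exact hB_mono hk_pos (by simp) (by exact_mod_cast hhi)
  calc ((2 : ℝ) ^ (m + 1)) ^ (q + 1) / B (2 ^ (m + 1)) / 2 ^ (q + 1)
      = #(Ioc (2 ^ m : ℕ) (2 ^ (m + 1))) • (((2 : ℝ) ^ m) ^ q / B (2 ^ (m + 1))) := by
        rw [hcard, nsmul_eq_mul]; push_cast; field_simp; ring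
    _ ≤ _ := card_nsmul_le_sum _ _ _ hterm

theorem sum_div_le_sum_Icc_two_pow {B : ℝ → ℝ} (hB_pos : ∀ x, 0 < x → 0 < B x)
    (hB_mono : MonotoneOn B (Set.Ioi 0)) (q n : ℕ) :
    ∑ m ∈ range n, ((2 : ℝ) ^ (m + 1)) ^ (q + 1) / B (2 ^ (m + 1)) / 2 ^ (q + 1) ≤
      ∑ k ∈ Icc (1 : ℕ) (2 ^ n), (k : ℝ) ^ q / B k := by
  calc _ ≤ ∑ m ∈ range n, ∑ k ∈ Ioc (2 ^ m : ℕ) (2 ^ (m + 1)), (k : ℝ) ^ q / B k :=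
        sum_le_sum fun m _ => div_le_sum_Ioc_two_pow hB_pos hB_mono q m
    _ = ∑ k ∈ Ioc (1 : ℕ) (2 ^ n), (k : ℝ) ^ q / B k := (sum_Ioc_one_two_pow _ n).symm
    _ ≤ _ := sum_le_sum_of_subset_of_nonneg Ioc_subset_Icc_self fun k hk _ =>
        div_nonneg (by positivity) (hB_pos k (by exact_mod_cast (mem_Icc.1 hk).1)).le

theorem div_pow_log_le_div_pow {B : ℝ → ℝ} (hB_pos : ∀ x, 0 < x → 0 < B x)
    (hB_mono : MonotoneOn B (Set.Ioi 0)) (q : ℕ) {n : ℕ} (hn : n ≠ 0) :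
    B (2 ^ Nat.log 2 n) / ((2 : ℝ) ^ Nat.log 2 n) ^ (q + 1) / 2 ^ (q + 1) ≤
      B n / (n : ℝ) ^ (q + 1) := by
  have hn_pos : (0 : ℝ) < n := by exact_mod_cast Nat.pos_of_ne_zero hn
  have hlo : (2 : ℝ) ^ Nat.log 2 n ≤ n := by exact_mod_cast Nat.pow_log_le_self 2 hn
  have hhi : (n : ℝ) ≤ 2 * 2 ^ Nat.log 2 n := by
    exact_mod_cast (Nat.lt_pow_succ_log_self one_lt_two n).le.trans_eq (pow_succ' 2 _)
  have hB_log := hB_pos _ (pow_pos two_pos (Nat.log 2 n))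
  have hB_le := hB_mono (by simp) hn_pos hlo
  calc B (2 ^ Nat.log 2 n) / ((2 : ℝ) ^ Nat.log 2 n) ^ (q + 1) / 2 ^ (q + 1)
      = B (2 ^ Nat.log 2 n) / (2 * 2 ^ Nat.log 2 n) ^ (q + 1) := by
        rw [mul_pow, div_div, mul_comm]
    _ ≤ B n / (n : ℝ) ^ (q + 1) := by
        gcongr
        exact hB_log.le.trans hB_le

theorem tendsto_div_pow_mul_sum_Icc_div_atTop {B : ℝ → ℝ} {q : ℕ}
    (hB_pos : ∀ x, 0 < x → 0 < B x) (hB_mono : MonotoneOn B (Set.Ioi 0))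
    (hB : Tendsto (fun x => B (2 * x) / B x) atTop (𝓝 (2 ^ (q + 1)))) :
    Tendsto (fun n : ℕ => B n / (n : ℝ) ^ (q + 1) * ∑ k ∈ Icc 1 n, (k : ℝ) ^ q / B k)
      atTop atTop := by
  set a : ℕ → ℝ := fun m => ((2 : ℝ) ^ m) ^ (q + 1) / B (2 ^ m) with ha_def
  have ha (m : ℕ) : 0 < a m := div_pos (by positivity) (hB_pos _ (by positivity))
  have hratio : Tendsto (fun m => a m / a (m + 1)) atTop (𝓝 1) := by
    have h := (hB.comp (tendsto_pow_atTop_atTop_of_one_lt one_lt_two)).div_const (2 ^ (q + 1))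
    rw [div_self (by positivity)] at h
    refine h.congr fun m => ?_
    have hB_m := hB_pos _ (pow_pos two_pos m)
    have hB_succ := hB_pos _ (pow_pos two_pos (m + 1))
    simp only [Function.comp_apply, ha_def, pow_succ]
    field_simp
    ring
  have hlog : Tendsto (Nat.log 2) atTop atTop :=
    tendsto_atTop_atTop.2 fun M => ⟨2 ^ M, fun n hn => Nat.le_log_of_pow_le one_lt_two hn⟩
  have hlower : ∀ᶠ n : ℕ in atTop,
      (∑ m ∈ range (Nat.log 2 n), a (m + 1)) / a (Nat.log 2 n) / (2 ^ (q + 1)) ^ 2 ≤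
        B n / (n : ℝ) ^ (q + 1) * ∑ k ∈ Icc 1 n, (k : ℝ) ^ q / B k := by
    filter_upwards [eventually_ne_atTop 0] with n hn
    have hsum := (sum_div_le_sum_Icc_two_pow hB_pos hB_mono q (Nat.log 2 n)).trans
      (sum_le_sum_of_subset_of_nonneg (Icc_subset_Icc_right (Nat.pow_log_le_self 2 hn))
        fun k hk _ => div_nonneg (by positivity)
          (hB_pos k (by exact_mod_cast (mem_Icc.1 hk).1)).le)
    rw [← sum_div] at hsum
    calc _ = (B (2 ^ Nat.log 2 n) / ((2 : ℝ) ^ Nat.log 2 n) ^ (q + 1) / 2 ^ (q + 1)) *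
          ((∑ m ∈ range (Nat.log 2 n), a (m + 1)) / 2 ^ (q + 1)) := by
          simp only [ha_def]; field_simp
      _ ≤ _ := mul_le_mul (div_pow_log_le_div_pow hB_pos hB_mono q hn) hsum
          (div_nonneg (sum_nonneg fun m _ => (ha _).le) (by positivity))
          (div_nonneg (hB_pos n (by positivity)).le (by positivity))
  exact tendsto_atTop_mono' _ hlower
    (((tendsto_sum_range_succ_div_atTop ha hratio).comp hlog).atTop_div_const (by positivity))

theorem mul_rpow_neg_pow_eq_sqrt_div {x y κ : ℝ} {d p : ℕ} (hx : 0 < x) (hy : 0 ≤ y)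
    (hκ : κ * ((2 * d : ℕ) : ℝ) = p) :
    (y * x ^ (-κ)) ^ d = √(y ^ (2 * d) / x ^ p) := by
  have hx_rpow : (x ^ (-κ)) ^ (2 * d) = (x ^ p)⁻¹ := by
    rw [← Real.rpow_natCast, ← Real.rpow_mul hx.le, neg_mul, hκ, Real.rpow_neg hx.le,
      Real.rpow_natCast]
  rw [eq_comm, Real.sqrt_eq_iff_eq_sq (by positivity) (by positivity), ← pow_mul, mul_comm d 2,
    mul_pow, hx_rpow, div_eq_mul_inv]

theorem tendsto_slowly_varying_pow_mul_sqrt_g_atTop_general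
    (d : ℕ) (β : ℝ)
    (hdb : (d : ℝ) / β = 3 / 2)
    (b : ℝ → ℝ) (hb_pos : ∀ x : ℝ, 0 < x → 0 < b x)
    (hb_mono : StrictMonoOn b (Set.Ioi 0))
    (hb_rv : RegularlyVarying b (1 / β)) :
    Tendsto
      (fun n : ℕ => (b n * (n : ℝ) ^ (-(1 / β))) ^ d *
        Real.sqrt (∑ k ∈ Finset.Icc 1 n, (k : ℝ) ^ 2 / b k ^ (2 * d)))
      atTop atTop := by
  have hindex : 1 / β * ((2 * d : ℕ) : ℝ) = ((2 + 1 : ℕ) : ℝ) := by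
    push_cast; linear_combination 2 * hdb
  have hB_doubling := hb_rv.pow (2 * d) 2 two_pos
  rw [hindex, Real.rpow_natCast] at hB_doubling
  have hkey := tendsto_div_pow_mul_sum_Icc_div_atTop (fun x hx => pow_pos (hb_pos x hx) _)
    (fun x hx y hy hxy => pow_le_pow_left₀ (hb_pos x hx).le (hb_mono.monotoneOn hx hy hxy) _)
    hB_doubling
  refine (Real.tendsto_sqrt_atTop.comp hkey).congr' ?_
  filter_upwards [eventually_ne_atTop 0] with n hn
  have hn_pos : (0 : ℝ) < n := by positivity
  have hbn := hb_pos n hn_pos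
  rw [Function.comp_apply, Real.sqrt_mul (by positivity),
    mul_rpow_neg_pow_eq_sqrt_div hn_pos hbn.le hindex]

/-- If `d/β = 3/2`, `b` is strictly increasing, continuous and regularly varying of
index `1/β`, `s(x) := b(x) x^{-1/β}` and `g(n) := ∑_{k=1}^n k² b(k)^{-2d}`, then
`s(n)^d √(g(n)) → ∞`. -/
theorem tendsto_slowly_varying_pow_mul_sqrt_g_atTop
    (d : ℕ) (hd : 1 ≤ d) (β : ℝ) (hβ₀ : 0 < β) (hβ₂ : β ≤ 2)
    (hdb : (d : ℝ) / β = 3 / 2)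
    (b : ℝ → ℝ) (hb_pos : ∀ x : ℝ, 0 < x → 0 < b x)
    (hb_mono : StrictMonoOn b (Set.Ioi 0)) (hb_cont : ContinuousOn b (Set.Ioi 0))
    (hb_rv : RegularlyVarying b (1 / β)) :
    Tendsto
      (fun n : ℕ => (b n * (n : ℝ) ^ (-(1 / β))) ^ d *
        Real.sqrt (∑ k ∈ Finset.Icc 1 n, (k : ℝ) ^ 2 / b k ^ (2 * d)))
      atTop atTop :=
  tendsto_slowly_varying_pow_mul_sqrt_g_atTop_general d β hdb b hb_pos hb_mono hb_rv

end
end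

section
/- Let X be any random walk on ℤ^d started at 0 and X′ an independent copy of X, and set h(n) := ∑_{k=1}^n P(X_k = 0). Then for all integers n, m ≥ 1, h(n)·h(m)·E[I_{n,m}] ≤ E[J_{2n,2m}]. -/
open MeasureTheory ProbabilityTheory Filter Topology Set

noncomputable section

variable {d : ℕ} {Ω : Type*} [MeasurableSpace Ω]

/-- The position at time `n` of the random walk with steps `Y`, started at `0`. -/
def walk (Y : ℕ → Ω → (Fin d → ℤ)) (n : ℕ) (ω : Ω) : Fin d → ℤ :=
  ∑ i ∈ Finset.range n, Y i ω

/-- The range `R_n = |{X_0, …, X_n}|` of the random walk with steps `Y`. -/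
def rangeRW (Y : ℕ → Ω → (Fin d → ℤ)) (n : ℕ) (ω : Ω) : ℕ :=
  ((Finset.range (n + 1)).image fun k => walk Y k ω).card

/-- `I_{n,m} = |{X_0, …, X_n} ∩ {X'_0, …, X'_m}|`, the number of common points of the ranges
of the two walks with steps `Y` and `Y'`. -/
def interRange (Y Y' : ℕ → Ω → (Fin d → ℤ)) (n m : ℕ) (ω : Ω) : ℕ :=
  (((Finset.range (n + 1)).image fun k => walk Y k ω) ∩
    ((Finset.range (m + 1)).image fun k => walk Y' k ω)).card

/-- The discrete intersection local time `J_{n,m} = ∑_{i=0}^n ∑_{j=0}^m 1{X_i = X'_j}`. -/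
def interLocalTime (Y Y' : ℕ → Ω → (Fin d → ℤ)) (n m : ℕ) (ω : Ω) : ℝ :=
  ∑ i ∈ Finset.range (n + 1), ∑ j ∈ Finset.range (m + 1),
    if walk Y i ω = walk Y' j ω then (1 : ℝ) else 0

/-- The truncated Green function `h(n) = ∑_{k=1}^n P(X_k = 0)`. -/
def hFun (P : Measure Ω) (Y : ℕ → Ω → (Fin d → ℤ)) (n : ℕ) : ℝ :=
  ∑ k ∈ Finset.Icc 1 n, (P {ω | walk Y k ω = 0}).toReal

/-!
Every common point of the two ranges is first visited by `X` at a unique time `s ≤ n` and by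
`X'` at a unique time `t ≤ m`. This first meeting depends only on the steps before `s` and `t`,
so it is independent of the walks returning to the meeting point at times `s + k` and `t + l`,
which happens with probability `P(X_k = 0) P(X_l = 0)`. Hence the expected number of such
quadruples `(s, t, k, l)` with `1 ≤ k ≤ n`, `1 ≤ l ≤ m` is `h(n) h(m) E[I_{n,m}]`. Each of them
yields an intersection `X_{s+k} = X'_{t+l}` counted by `J_{2n,2m}`, distinct for distinct
quadruples because `s` and `t` are recovered from the point `X_{s+k} = X_s` as first visit times.
-/

open scoped Finset

section FirstVisit

variable {α : Type*}

def IsFirstVisit (x : ℕ → α) (s : ℕ) : Prop :=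
  ∀ r < s, x r ≠ x s

instance [DecidableEq α] (x : ℕ → α) : DecidablePred (IsFirstVisit x) :=
  fun s => inferInstanceAs (Decidable (∀ r < s, x r ≠ x s))

lemma IsFirstVisit.eq_of_apply_eq {x : ℕ → α} {s s' : ℕ} (hs : IsFirstVisit x s)
    (hs' : IsFirstVisit x s') (h : x s = x s') : s = s' := by
  rcases lt_trichotomy s s' with hlt | heq | hgt
  · exact absurd h (hs' s hlt)
  · exact heq
  · exact absurd h.symm (hs s' hgt)

lemma exists_isFirstVisit_le [DecidableEq α] (x : ℕ → α) (a : ℕ) :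
    ∃ s ≤ a, IsFirstVisit x s ∧ x s = x a := by
  have hex : ∃ s, x s = x a := ⟨a, rfl⟩
  refine ⟨Nat.find hex, Nat.find_min' hex rfl, fun r hr => ?_, Nat.find_spec hex⟩
  rw [Nat.find_spec hex]
  exact Nat.find_min hex hr

def IsFirstMeet (x x' : ℕ → α) (s t : ℕ) : Prop :=
  x s = x' t ∧ IsFirstVisit x s ∧ IsFirstVisit x' t

instance [DecidableEq α] (x x' : ℕ → α) (s t : ℕ) : Decidable (IsFirstMeet x x' s t) :=
  inferInstanceAs (Decidable (_ ∧ _ ∧ _))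

variable [DecidableEq α]

def meets (x x' : ℕ → α) (n m : ℕ) : Finset (ℕ × ℕ) :=
  (Finset.range (n + 1) ×ˢ Finset.range (m + 1)).filter fun p => x p.1 = x' p.2

def firstMeets (x x' : ℕ → α) (n m : ℕ) : Finset (ℕ × ℕ) :=
  (Finset.range (n + 1) ×ˢ Finset.range (m + 1)).filter fun p => IsFirstMeet x x' p.1 p.2

def firstMeetReturns (x x' : ℕ → α) (n m : ℕ) : Finset ((ℕ × ℕ) × ℕ × ℕ) :=
  ((Finset.range (n + 1) ×ˢ Finset.range (m + 1)) ×ˢ (Finset.Icc 1 n ×ˢ Finset.Icc 1 m)).filter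
    fun q => IsFirstMeet x x' q.1.1 q.1.2 ∧
      x (q.1.1 + q.2.1) = x q.1.1 ∧ x' (q.1.2 + q.2.2) = x' q.1.2

lemma card_image_inter_image_eq_card_firstMeets (x x' : ℕ → α) (n m : ℕ) :
    #((Finset.range (n + 1)).image x ∩ (Finset.range (m + 1)).image x') =
      #(firstMeets x x' n m) := by
  refine (Finset.card_nbij (fun p => x p.1) ?_ ?_ ?_).symm
  · rintro ⟨s, t⟩ hp
    simp only [firstMeets, Finset.coe_filter, Finset.mem_product, Finset.mem_range,
      Set.mem_ofPred_eq] at hp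
    obtain ⟨⟨hs, ht⟩, hst, -, -⟩ := hp
    simp only [Finset.coe_inter, Finset.coe_image, Finset.coe_range, Set.mem_inter_iff,
      Set.mem_image, Set.mem_Iio]
    exact ⟨⟨s, hs, rfl⟩, t, ht, hst.symm⟩
  · rintro ⟨s, t⟩ hp ⟨s', t'⟩ hp' h
    simp only [firstMeets, Finset.coe_filter, Set.mem_ofPred_eq] at hp hp'
    obtain ⟨-, hst, hs, ht⟩ := hp
    obtain ⟨-, hst', hs', ht'⟩ := hp'
    have hss : s = s' := hs.eq_of_apply_eq hs' h
    have htt : t = t' := ht.eq_of_apply_eq ht' (by rw [← hst, ← hst', hss])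
    rw [hss, htt]
  · intro z hz
    simp only [Finset.coe_inter, Finset.coe_image, Finset.coe_range, Set.mem_inter_iff,
      Set.mem_image, Set.mem_Iio] at hz
    obtain ⟨⟨a, ha, rfl⟩, b, hb, hba⟩ := hz
    obtain ⟨s, hsa, hs, hxs⟩ := exists_isFirstVisit_le x a
    obtain ⟨t, htb, ht, hxt⟩ := exists_isFirstVisit_le x' b
    refine ⟨(s, t), ?_, hxs⟩
    simp only [firstMeets, Finset.coe_filter, Finset.mem_product, Finset.mem_range,
      Set.mem_ofPred_eq]
    exact ⟨⟨by omega, by omega⟩, by rw [hxs, hxt, hba], hs, ht⟩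

/-- `(s, t, k, l) ↦ (s + k, t + l)` is injective here: `s` and `t` are the first visit times of
the point `x (s + k) = x s = x' (t + l)`. -/
lemma card_firstMeetReturns_le (x x' : ℕ → α) (n m : ℕ) :
    #(firstMeetReturns x x' n m) ≤ #(meets x x' (2 * n) (2 * m)) := by
  refine Finset.card_le_card_of_injOn (fun q => (q.1.1 + q.2.1, q.1.2 + q.2.2)) ?_ ?_
  · rintro ⟨⟨s, t⟩, k, l⟩ h
    simp only [firstMeetReturns, meets, Finset.coe_filter, Finset.mem_product, Finset.mem_range,
      Finset.mem_Icc, Set.mem_ofPred_eq] at h ⊢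
    obtain ⟨⟨⟨hs, ht⟩, ⟨-, hk⟩, -, hl⟩, ⟨hst, -, -⟩, hk', hl'⟩ := h
    exact ⟨⟨by omega, by omega⟩, by rw [hk', hl', hst]⟩
  · rintro ⟨⟨s, t⟩, k, l⟩ h ⟨⟨s', t'⟩, k', l'⟩ h' heq
    simp only [firstMeetReturns, Finset.coe_filter, Set.mem_ofPred_eq] at h h'
    obtain ⟨-, ⟨-, hs, ht⟩, hk, hl⟩ := h
    obtain ⟨-, ⟨-, hs', ht'⟩, hk', hl'⟩ := h'
    simp only [Prod.mk.injEq] at heq ⊢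
    have hss : s = s' := hs.eq_of_apply_eq hs' (by rw [← hk, ← hk', heq.1])
    have htt : t = t' := ht.eq_of_apply_eq ht' (by rw [← hl, ← hl', heq.2])
    omega

end FirstVisit

section IndependentSteps

variable {ι β Ω' : Type*} [MeasurableSpace β]

abbrev stepSigma (Z : ι → Ω' → β) (S : Set ι) : MeasurableSpace Ω' :=
  ⨆ i ∈ S, MeasurableSpace.comap (Z i) ‹MeasurableSpace β›

lemma measurable_stepSigma {Z : ι → Ω' → β} {S : Set ι} {i : ι} (hi : i ∈ S) :
    Measurable[stepSigma Z S] (Z i) :=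
  Measurable.of_comap_le (le_iSup₂ (f := fun i (_ : i ∈ S) => MeasurableSpace.comap (Z i) _) i hi)

lemma measurable_sum_stepSigma [AddCommMonoid β] [MeasurableAdd₂ β]
    {Z : ι → Ω' → β} {S : Set ι} {u : Finset ℕ} {g : ℕ → ι} (h : ∀ j ∈ u, g j ∈ S) :
    Measurable[stepSigma Z S] fun ω => ∑ j ∈ u, Z (g j) ω :=
  Finset.measurable_sum u fun j hj => measurable_stepSigma (h j hj)

lemma stepSigma_le {Z : ι → Ω → β} (hZ : ∀ i, Measurable (Z i)) (S : Set ι) :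
    stepSigma Z S ≤ ‹MeasurableSpace Ω› :=
  iSup₂_le fun i _ => (hZ i).comap_le

lemma measure_inter_eq_mul_of_disjoint {P : Measure Ω} {Z : ι → Ω → β}
    (hZ : ∀ i, Measurable (Z i)) (hindep : iIndepFun Z P) {S T : Set ι} (hST : Disjoint S T)
    {A B : Set Ω} (hA : MeasurableSet[stepSigma Z S] A) (hB : MeasurableSet[stepSigma Z T] B) :
    P (A ∩ B) = P A * P B :=
  (Indep_iff _ _ P).1 (indep_iSup_of_disjoint (fun i => (hZ i).comap_le) hindep hST) A B hA hB

lemma identDistrib_sum_range_comp [AddCommMonoid β] [MeasurableAdd₂ β] {P : Measure Ω}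
    {Z : ι → Ω → β} {Z₀ : Ω → β} (hindep : iIndepFun Z P)
    (hident : ∀ i, IdentDistrib (Z i) Z₀ P P) {g g' : ℕ → ι} (hg : g.Injective)
    (hg' : g'.Injective) (k : ℕ) :
    IdentDistrib (fun ω => ∑ j ∈ Finset.range k, Z (g j) ω)
      (fun ω => ∑ j ∈ Finset.range k, Z (g' j) ω) P P :=
  (IdentDistrib.pi (fun j => (hident (g j)).trans (hident (g' j)).symm)
    (hindep.precomp hg) (hindep.precomp hg')).comp
    (Finset.measurable_sum _ fun j _ => measurable_pi_apply j)

end IndependentSteps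

section CardFilter

variable {ι : Type*} (u : Finset ι)

lemma natCast_card_filter_eq_sum_indicator {α : Type*} (p : ι → α → Prop)
    [∀ i a, Decidable (p i a)] (a : α) :
    (#(u.filter (p · a)) : ℝ) = ∑ i ∈ u, {a | p i a}.indicator 1 a := by
  rw [Finset.natCast_card_filter]
  simp only [Set.indicator_apply, Set.mem_ofPred_eq, Pi.one_apply]

variable {P : Measure Ω} [IsFiniteMeasure P] (p : ι → Ω → Prop) [∀ i ω, Decidable (p i ω)]

lemma integrable_card_filter (hp : ∀ i ∈ u, MeasurableSet {ω | p i ω}) :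
    Integrable (fun ω => (#(u.filter (p · ω)) : ℝ)) P := by
  simp_rw [natCast_card_filter_eq_sum_indicator]
  exact integrable_finsetSum u fun i hi => (integrable_const 1).indicator (hp i hi)

lemma integral_card_filter (hp : ∀ i ∈ u, MeasurableSet {ω | p i ω}) :
    ∫ ω, (#(u.filter (p · ω)) : ℝ) ∂P = ∑ i ∈ u, P.real {ω | p i ω} := by
  simp_rw [natCast_card_filter_eq_sum_indicator]
  rw [integral_finsetSum u fun i hi => (integrable_const 1).indicator (hp i hi)]
  exact Finset.sum_congr rfl fun i hi => integral_indicator_one (hp i hi)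

end CardFilter

section Walk

variable {Ω' : Type*}

def firstMeetEvent (Y Y' : ℕ → Ω' → (Fin d → ℤ)) (s t : ℕ) : Set Ω' :=
  {ω | IsFirstMeet (walk Y · ω) (walk Y' · ω) s t}

def returnEvent (Y : ℕ → Ω' → (Fin d → ℤ)) (s k : ℕ) : Set Ω' :=
  {ω | walk Y (s + k) ω = walk Y s ω}

lemma returnEvent_eq (Y : ℕ → Ω' → (Fin d → ℤ)) (s k : ℕ) :
    returnEvent Y s k = {ω | ∑ j ∈ Finset.range k, Y (s + j) ω = 0} := by
  ext ω
  simp only [returnEvent, walk, Finset.sum_range_add, Set.mem_ofPred_eq, add_eq_left]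

lemma interLocalTime_eq_card_meets (Y Y' : ℕ → Ω' → (Fin d → ℤ)) (n m : ℕ)
    (ω : Ω') : interLocalTime Y Y' n m ω = #(meets (walk Y · ω) (walk Y' · ω) n m) := by
  rw [interLocalTime, meets, Finset.natCast_card_filter, Finset.sum_product]

variable {ι : Type*} {Z : ι → Ω' → (Fin d → ℤ)} {S : Set ι}

lemma measurable_walk_stepSigma {W : ℕ → Ω' → (Fin d → ℤ)} {g : ℕ → ι}
    (hW : ∀ j, W j = Z (g j)) {r : ℕ} (h : ∀ j < r, g j ∈ S) :
    Measurable[stepSigma Z S] (walk W r) := by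
  unfold walk
  simp only [hW]
  exact measurable_sum_stepSigma fun j hj => h j (Finset.mem_range.1 hj)

lemma measurableSet_returnEvent_stepSigma {W : ℕ → Ω' → (Fin d → ℤ)} {g : ℕ → ι}
    (hW : ∀ j, W j = Z (g j)) {s : ℕ} (h : ∀ j ≥ s, g j ∈ S) (k : ℕ) :
    MeasurableSet[stepSigma Z S] (returnEvent W s k) := by
  simp only [returnEvent_eq, hW]
  exact measurable_sum_stepSigma (fun j _ => h (s + j) (Nat.le_add_right s j))
    (measurableSet_singleton 0)

lemma measurableSet_firstMeetEvent_stepSigma {Y Y' : ℕ → Ω' → (Fin d → ℤ)} {g g' : ℕ → ι}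
    (hY : ∀ j, Y j = Z (g j)) (hY' : ∀ j, Y' j = Z (g' j)) {s t : ℕ}
    (hs : ∀ j < s, g j ∈ S) (ht : ∀ j < t, g' j ∈ S) :
    MeasurableSet[stepSigma Z S] (firstMeetEvent Y Y' s t) := by
  have hX : ∀ r ≤ s, Measurable[stepSigma Z S] (walk Y r) := fun r hr =>
    measurable_walk_stepSigma hY fun j hj => hs j (by omega)
  have hX' : ∀ r ≤ t, Measurable[stepSigma Z S] (walk Y' r) := fun r hr =>
    measurable_walk_stepSigma hY' fun j hj => ht j (by omega)
  simp only [firstMeetEvent, IsFirstMeet, IsFirstVisit, Set.ofPred_and, Set.ofPred_forall]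
  refine (measurableSet_eq_fun (hX s le_rfl) (hX' t le_rfl)).inter
    ((MeasurableSet.iInter fun r => MeasurableSet.iInter fun hr =>
      (measurableSet_eq_fun (hX r hr.le) (hX s le_rfl)).compl).inter
    (MeasurableSet.iInter fun r => MeasurableSet.iInter fun hr =>
      (measurableSet_eq_fun (hX' r hr.le) (hX' t le_rfl)).compl))

end Walk

section TwoWalks

variable {P : Measure Ω} {Y Y' : ℕ → Ω → (Fin d → ℤ)}

lemma measurable_walk (hY : ∀ i, Measurable (Y i)) (r : ℕ) :
    Measurable (walk Y r) :=
  Finset.measurable_sum _ fun i _ => hY i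

lemma measurableSet_firstMeetEvent (hmeas : ∀ i : ℕ ⊕ ℕ, Measurable (Sum.elim Y Y' i))
    (s t : ℕ) : MeasurableSet (firstMeetEvent Y Y' s t) :=
  stepSigma_le hmeas univ _ <| measurableSet_firstMeetEvent_stepSigma (g := Sum.inl)
    (g' := Sum.inr) (fun _ => rfl) (fun _ => rfl) (fun _ _ => trivial) (fun _ _ => trivial)

lemma measurableSet_returnEvent (hY : ∀ i, Measurable (Y i)) (s k : ℕ) :
    MeasurableSet (returnEvent Y s k) :=
  measurableSet_eq_fun (measurable_walk hY _) (measurable_walk hY _)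

lemma measure_returnEvent (hindep : iIndepFun (Sum.elim Y Y') P)
    (hident : ∀ i : ℕ ⊕ ℕ, IdentDistrib (Sum.elim Y Y' i) (Y 0) P P)
    {W : ℕ → Ω → (Fin d → ℤ)} {g : ℕ → ℕ ⊕ ℕ} (hg : g.Injective)
    (hW : ∀ j, W j = Sum.elim Y Y' (g j)) (s k : ℕ) :
    P (returnEvent W s k) = P {ω | walk Y k ω = 0} := by
  simp only [returnEvent_eq, hW]
  exact (identDistrib_sum_range_comp hindep hident (hg.comp (add_right_injective s))
    Sum.inl_injective k).measure_mem_eq (measurableSet_singleton 0)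

lemma measure_firstMeetEvent_inter_returnEvent
    (hmeas : ∀ i : ℕ ⊕ ℕ, Measurable (Sum.elim Y Y' i)) (hindep : iIndepFun (Sum.elim Y Y') P)
    (hident : ∀ i : ℕ ⊕ ℕ, IdentDistrib (Sum.elim Y Y' i) (Y 0) P P) (s t k l : ℕ) :
    P (firstMeetEvent Y Y' s t ∩ (returnEvent Y s k ∩ returnEvent Y' t l)) =
      P (firstMeetEvent Y Y' s t) * (P {ω | walk Y k ω = 0} * P {ω | walk Y l ω = 0}) := by
  have hpast : MeasurableSet[stepSigma (Sum.elim Y Y') (Sum.inl '' Iio s ∪ Sum.inr '' Iio t)]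
      (firstMeetEvent Y Y' s t) :=
    measurableSet_firstMeetEvent_stepSigma (g := Sum.inl) (g' := Sum.inr) (fun _ => rfl)
      (fun _ => rfl) (fun j hj => Or.inl ⟨j, hj, rfl⟩) (fun j hj => Or.inr ⟨j, hj, rfl⟩)
  have hfuture : MeasurableSet[stepSigma (Sum.elim Y Y') (Sum.inl '' Ici s ∪ Sum.inr '' Ici t)]
      (returnEvent Y s k ∩ returnEvent Y' t l) :=
    (measurableSet_returnEvent_stepSigma (g := Sum.inl) (fun _ => rfl)
      (fun j hj => Or.inl ⟨j, hj, rfl⟩) k).inter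
    (measurableSet_returnEvent_stepSigma (g := Sum.inr) (fun _ => rfl)
      (fun j hj => Or.inr ⟨j, hj, rfl⟩) l)
  have hdisj : Disjoint (Sum.inl '' Iio s ∪ Sum.inr '' Iio t : Set (ℕ ⊕ ℕ))
      (Sum.inl '' Ici s ∪ Sum.inr '' Ici t) := by
    rw [Set.disjoint_left]
    rintro _ (⟨j, hj, rfl⟩ | ⟨j, hj, rfl⟩) (⟨j', hj', h⟩ | ⟨j', hj', h⟩) <;>
      simp_all only [mem_Iio, mem_Ici, Sum.inl.injEq, Sum.inr.injEq, reduceCtorEq] <;> omega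
  have hY : MeasurableSet[stepSigma (Sum.elim Y Y') (range Sum.inl)] (returnEvent Y s k) :=
    measurableSet_returnEvent_stepSigma (g := Sum.inl) (fun _ => rfl)
      (fun j _ => mem_range_self j) k
  have hY' : MeasurableSet[stepSigma (Sum.elim Y Y') (range Sum.inr)] (returnEvent Y' t l) :=
    measurableSet_returnEvent_stepSigma (g := Sum.inr) (fun _ => rfl)
      (fun j _ => mem_range_self j) l
  rw [measure_inter_eq_mul_of_disjoint hmeas hindep hdisj hpast hfuture,
    measure_inter_eq_mul_of_disjoint hmeas hindep Set.isCompl_range_inl_range_inr.disjoint hY hY',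
    measure_returnEvent (W := Y) hindep hident Sum.inl_injective (fun _ => rfl),
    measure_returnEvent (W := Y') hindep hident Sum.inr_injective (fun _ => rfl)]

lemma hFun_mul_hFun_mul_measureReal_firstMeetEvent
    (hmeas : ∀ i : ℕ ⊕ ℕ, Measurable (Sum.elim Y Y' i)) (hindep : iIndepFun (Sum.elim Y Y') P)
    (hident : ∀ i : ℕ ⊕ ℕ, IdentDistrib (Sum.elim Y Y' i) (Y 0) P P) (n m s t : ℕ) :
    hFun P Y n * hFun P Y m * P.real (firstMeetEvent Y Y' s t) =
      ∑ q ∈ Finset.Icc 1 n ×ˢ Finset.Icc 1 m,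
        P.real (firstMeetEvent Y Y' s t ∩ (returnEvent Y s q.1 ∩ returnEvent Y' t q.2)) := by
  rw [Finset.sum_product, hFun, hFun, Finset.sum_mul_sum, Finset.sum_mul]
  refine Finset.sum_congr rfl fun k _ => ?_
  rw [Finset.sum_mul]
  refine Finset.sum_congr rfl fun l _ => ?_
  simp only [measureReal_def, measure_firstMeetEvent_inter_returnEvent hmeas hindep hident,
    ENNReal.toReal_mul]
  ring

lemma hFun_mul_hFun_mul_integral_interRange_eq [IsFiniteMeasure P]
    (hmeas : ∀ i : ℕ ⊕ ℕ, Measurable (Sum.elim Y Y' i)) (hindep : iIndepFun (Sum.elim Y Y') P)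
    (hident : ∀ i : ℕ ⊕ ℕ, IdentDistrib (Sum.elim Y Y' i) (Y 0) P P) (n m : ℕ) :
    hFun P Y n * hFun P Y m * ∫ ω, (interRange Y Y' n m ω : ℝ) ∂P =
      ∫ ω, (#(firstMeetReturns (walk Y · ω) (walk Y' · ω) n m) : ℝ) ∂P := by
  have hY : ∀ i, Measurable (Y i) := fun i => hmeas (.inl i)
  have hY' : ∀ i, Measurable (Y' i) := fun i => hmeas (.inr i)
  set A := Finset.range (n + 1) ×ˢ Finset.range (m + 1)
  set B := Finset.Icc 1 n ×ˢ Finset.Icc 1 m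
  calc hFun P Y n * hFun P Y m * ∫ ω, (interRange Y Y' n m ω : ℝ) ∂P
      = ∑ p ∈ A, hFun P Y n * hFun P Y m * P.real (firstMeetEvent Y Y' p.1 p.2) := by
        simp only [interRange, card_image_inter_image_eq_card_firstMeets, firstMeets]
        rw [integral_card_filter A (fun p ω => IsFirstMeet (walk Y · ω) (walk Y' · ω) p.1 p.2)
          fun p _ => measurableSet_firstMeetEvent hmeas p.1 p.2, Finset.mul_sum]
        rfl
    _ = ∑ q ∈ A ×ˢ B, P.real (firstMeetEvent Y Y' q.1.1 q.1.2 ∩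
          (returnEvent Y q.1.1 q.2.1 ∩ returnEvent Y' q.1.2 q.2.2)) := by
        rw [Finset.sum_product A B]
        exact Finset.sum_congr rfl fun p _ =>
          hFun_mul_hFun_mul_measureReal_firstMeetEvent hmeas hindep hident n m p.1 p.2
    _ = ∫ ω, (#(firstMeetReturns (walk Y · ω) (walk Y' · ω) n m) : ℝ) ∂P :=
        (integral_card_filter (A ×ˢ B) (fun q ω => IsFirstMeet (walk Y · ω) (walk Y' · ω)
          q.1.1 q.1.2 ∧ walk Y (q.1.1 + q.2.1) ω = walk Y q.1.1 ω ∧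
            walk Y' (q.1.2 + q.2.2) ω = walk Y' q.1.2 ω) fun q _ =>
          (measurableSet_firstMeetEvent hmeas _ _).inter
            ((measurableSet_returnEvent hY _ _).inter (measurableSet_returnEvent hY' _ _))).symm

end TwoWalks

theorem hFun_mul_hFun_mul_integral_interRange_le_general
    {d : ℕ} {Ω : Type} [MeasurableSpace Ω] (P : Measure Ω)
    [IsProbabilityMeasure P]
    (Y Y' : ℕ → Ω → (Fin d → ℤ))
    (hmeas : ∀ i : ℕ ⊕ ℕ, Measurable (Sum.elim Y Y' i))
    (hindep : iIndepFun (Sum.elim Y Y') P)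
    (hident : ∀ i : ℕ ⊕ ℕ, IdentDistrib (Sum.elim Y Y' i) (Y 0) P P)
    (n m : ℕ) :
    hFun P Y n * hFun P Y m * ∫ ω, (interRange Y Y' n m ω : ℝ) ∂P
      ≤ ∫ ω, interLocalTime Y Y' (2 * n) (2 * m) ω ∂P := by
  have hY : ∀ i, Measurable (Y i) := fun i => hmeas (.inl i)
  have hY' : ∀ i, Measurable (Y' i) := fun i => hmeas (.inr i)
  rw [hFun_mul_hFun_mul_integral_interRange_eq hmeas hindep hident]
  simp only [interLocalTime_eq_card_meets]
  refine integral_mono ?_ ?_ fun ω => Nat.cast_le.mpr (card_firstMeetReturns_le _ _ n m)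
  · exact integrable_card_filter _ _ fun q _ => (measurableSet_firstMeetEvent hmeas _ _).inter
      ((measurableSet_returnEvent hY _ _).inter (measurableSet_returnEvent hY' _ _))
  · exact integrable_card_filter _ _ fun ij _ =>
      measurableSet_eq_fun (measurable_walk hY ij.1) (measurable_walk hY' ij.2)

/-- If `X`, `X'` are two independent copies of a random walk on `ℤ^d` started at `0`, then
for all `n, m ≥ 1`, `h(n) h(m) E[I_{n,m}] ≤ E[J_{2n,2m}]`. -/
theorem hFun_mul_hFun_mul_integral_interRange_le
    {d : ℕ} (hd : 1 ≤ d) {Ω : Type} [MeasurableSpace Ω] (P : Measure Ω)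
    [IsProbabilityMeasure P]
    (Y Y' : ℕ → Ω → (Fin d → ℤ))
    (hmeas : ∀ i : ℕ ⊕ ℕ, Measurable (Sum.elim Y Y' i))
    (hindep : iIndepFun (Sum.elim Y Y') P)
    (hident : ∀ i : ℕ ⊕ ℕ, IdentDistrib (Sum.elim Y Y' i) (Y 0) P P)
    (n m : ℕ) (hn : 1 ≤ n) (hm : 1 ≤ m) :
    hFun P Y n * hFun P Y m * ∫ ω, (interRange Y Y' n m ω : ℝ) ∂P
      ≤ ∫ ω, interLocalTime Y Y' (2 * n) (2 * m) ω ∂P :=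
  hFun_mul_hFun_mul_integral_interRange_le_general P Y Y' hmeas hindep hident n m

end
end

section
/- Let X be any random walk on ℤ^d started at 0 and let p ≥ 1 be an integer. Then there is a constant C_p > 0, depending only on p, such that for all n ≥ 1, E[ R_n^{2p} ] ≤ C_p · ( E[R_n] )^{2p}. -/
open MeasureTheory ProbabilityTheory Filter Topology Set

noncomputable section

variable {d : ℕ} {Ω : Type*} [MeasurableSpace Ω]

/-!
Let `N_q(s)` be the number of chains `t₀ ≤ ⋯ ≤ t_q = s` of times at which the walk visits a new
site. Since `R` grows by one exactly at such times and `(a+1)^(q+1) - a^(q+1) ≤ (q+1)(a+1)^q`,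
`R_t^(q+1) ≤ (q+1) ∑_{s ≤ t new} R_s^q`, and by induction `R_n^(q+1) ≤ (q+1)! ∑_{s ≤ n} N_q(s)`.

If the walk is at a new site at time `s`, its steps in `[r, s)` form a walk that ends at a new
site. That event depends only on those steps, so it is independent of `N_{q-1}(r)` (a function
of the first `r` steps) and, by stationarity, has probability `a(s - r)`, where
`a(k) = P(X_k is new)`. Hence `E N_q(s) ≤ ∑_{r ≤ s} a(s - r) E N_{q-1}(r)`, and summing over
`s ≤ n` gives `∑_{s ≤ n} E N_q(s) ≤ (∑_{k ≤ n} a(k))^(q+1) = (E R_n)^(q+1)`.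
-/

open scoped ENNReal Nat

theorem Nat.succ_pow_succ_le (a q : ℕ) :
    (a + 1) ^ (q + 1) ≤ a ^ (q + 1) + (q + 1) * (a + 1) ^ q := by
  induction q with
  | zero => simp
  | succ q ih =>
    calc (a + 1) ^ (q + 2) = (a + 1) ^ (q + 1) * a + (a + 1) ^ (q + 1) := by ring
      _ ≤ (a ^ (q + 1) + (q + 1) * (a + 1) ^ q) * a + (a + 1) ^ (q + 1) := by gcongr
      _ = a ^ (q + 2) + (q + 1) * ((a + 1) ^ q * a) + (a + 1) ^ (q + 1) := by ring
      _ ≤ a ^ (q + 2) + (q + 1) * ((a + 1) ^ q * (a + 1)) + (a + 1) ^ (q + 1) := by gcongr; omega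
      _ = a ^ (q + 2) + (q + 2) * (a + 1) ^ (q + 1) := by ring

namespace RandomWalk

section Steps

variable {Ω β : Type*} {mΩ : MeasurableSpace Ω} [MeasurableSpace β]

def steps (Y : ℕ → Ω → β) (r m : ℕ) (ω : Ω) : Fin m → β := fun i => Y (r + i) ω

abbrev stepsMeasurableSpace (Y : ℕ → Ω → β) (S : Set ℕ) : MeasurableSpace Ω :=
  ⨆ i ∈ S, MeasurableSpace.comap (Y i) ‹_›

variable {Y : ℕ → Ω → β} {P : Measure Ω}

lemma stepsMeasurableSpace_le (hY : ∀ i, Measurable (Y i)) (S : Set ℕ) :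
    stepsMeasurableSpace Y S ≤ mΩ :=
  iSup₂_le fun i _ => (hY i).comap_le

lemma measurable_steps {S : Set ℕ} {r m : ℕ} (h : ∀ i < m, r + i ∈ S) :
    Measurable[stepsMeasurableSpace Y S] (steps Y r m) := by
  rw [measurable_iff_comap_le, MeasurableSpace.pi, MeasurableSpace.comap_iSup]
  refine iSup_le fun i => ?_
  rw [MeasurableSpace.comap_comp]
  exact le_iSup₂ (f := fun j (_ : j ∈ S) => MeasurableSpace.comap (Y j) ‹_›) _ (h i i.2)

lemma indep_stepsMeasurableSpace (hY : ∀ i, Measurable (Y i)) (hInd : iIndepFun Y P)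
    {S T : Set ℕ} (hST : Disjoint S T) :
    Indep (stepsMeasurableSpace Y S) (stepsMeasurableSpace Y T) P :=
  indep_iSup_of_disjoint (fun i => (hY i).comap_le) hInd hST

lemma identDistrib_steps (hY : ∀ i, Measurable (Y i)) (hInd : iIndepFun Y P)
    (hId : ∀ i, IdentDistrib (Y i) (Y 0) P P) (r m : ℕ) :
    IdentDistrib (steps Y r m) (steps Y 0 m) P P := by
  have law (s : ℕ) : P.map (steps Y s m) = Measure.pi fun _ => P.map (Y 0) := by
    have hInd' : iIndepFun (fun i : Fin m => Y (s + i)) P :=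
      hInd.precomp fun i j h => Fin.ext (Nat.add_left_cancel h)
    change P.map (fun ω (i : Fin m) => Y (s + i) ω) = _
    rw [hInd'.map_fun_eq_pi_map fun i => (hY _).aemeasurable]
    simp_rw [(hId _).map_eq]
  exact ⟨(measurable_pi_lambda _ fun i => hY _).aemeasurable,
    (measurable_pi_lambda _ fun i => hY _).aemeasurable, by rw [law, law]⟩

lemma lintegral_indicator_steps_preimage (hY : ∀ i, Measurable (Y i)) (hInd : iIndepFun Y P)
    (hId : ∀ i, IdentDistrib (Y i) (Y 0) P P) {r m : ℕ} {F : Ω → ℝ≥0∞}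
    (hF : Measurable[stepsMeasurableSpace Y (Iio r)] F) {B : Set (Fin m → β)}
    (hB : MeasurableSet B) :
    ∫⁻ ω, (steps Y r m ⁻¹' B).indicator F ω ∂P = P (steps Y 0 m ⁻¹' B) * ∫⁻ ω, F ω ∂P := by
  have hS : MeasurableSet[stepsMeasurableSpace Y (Ico r (r + m))] (steps Y r m ⁻¹' B) :=
    measurable_steps (fun i hi => Set.mem_Ico.2 ⟨le_self_add, by omega⟩) hB
  have hdisj : Disjoint (Ico r (r + m)) (Iio r) :=
    Set.disjoint_left.2 fun i hi hi' => not_lt.2 hi.1 hi'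
  calc ∫⁻ ω, (steps Y r m ⁻¹' B).indicator F ω ∂P
      = ∫⁻ ω, (steps Y r m ⁻¹' B).indicator 1 ω * F ω ∂P := by
        refine lintegral_congr fun ω => ?_
        by_cases h : ω ∈ steps Y r m ⁻¹' B <;> simp [h]
    _ = P (steps Y r m ⁻¹' B) * ∫⁻ ω, F ω ∂P := by
        rw [lintegral_mul_eq_lintegral_mul_lintegral_of_independent_measurableSpace
          (stepsMeasurableSpace_le hY _) (stepsMeasurableSpace_le hY _)
          (indep_stepsMeasurableSpace hY hInd hdisj) (f := (steps Y r m ⁻¹' B).indicator 1)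
          (measurable_const.indicator hS) hF,
          lintegral_indicator_one (stepsMeasurableSpace_le hY _ _ hS)]
    _ = P (steps Y 0 m ⁻¹' B) * ∫⁻ ω, F ω ∂P := by
        rw [(identDistrib_steps hY hInd hId r m).measure_mem_eq hB]

end Steps

section Walk

variable {Ω : Type*} {mΩ : MeasurableSpace Ω} {Y : ℕ → Ω → (Fin d → ℤ)} {P : Measure Ω}

def newAt (Y : ℕ → Ω → (Fin d → ℤ)) (k : ℕ) : Set Ω :=
  {ω | ∀ j < k, walk Y j ω ≠ walk Y k ω}

-- `∑ i ∈ Ici j, u i` is the displacement of the walk with steps `u` from time `j` to time `m`.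
def endsAtNewSite (m : ℕ) : Set (Fin m → Fin d → ℤ) :=
  {u | ∀ j, ∑ i ∈ Finset.Ici j, u i ≠ 0}

lemma newAt_zero : newAt Y 0 = univ :=
  eq_univ_of_forall fun _ j hj => absurd hj (Nat.not_lt_zero j)

lemma sum_Ici_steps (r : ℕ) {m : ℕ} (j : Fin m) (ω : Ω) :
    ∑ i ∈ Finset.Ici j, steps Y r m ω i = walk Y (r + m) ω - walk Y (r + j) ω :=
  calc ∑ i ∈ Finset.Ici j, steps Y r m ω i = ∑ k ∈ Finset.Ico (j : ℕ) m, Y (r + k) ω := by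
        rw [← Fin.map_valEmbedding_Ici, Finset.sum_map]; rfl
    _ = ∑ k ∈ Finset.Ico (r + j) (r + m), Y k ω := by
        rw [Finset.sum_Ico_add (fun k => Y k ω), add_comm (j : ℕ), add_comm m]
    _ = walk Y (r + m) ω - walk Y (r + j) ω := Finset.sum_Ico_eq_sub _ (by omega)

lemma steps_mem_endsAtNewSite_iff (r m : ℕ) (ω : Ω) :
    steps Y r m ω ∈ endsAtNewSite m ↔ ∀ j < m, walk Y (r + j) ω ≠ walk Y (r + m) ω := by
  simp only [endsAtNewSite, mem_ofPred_eq, sum_Ici_steps, sub_ne_zero, ne_comm, Fin.forall_iff]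

lemma newAt_eq_preimage_steps (m : ℕ) : newAt Y m = steps Y 0 m ⁻¹' endsAtNewSite m := by
  ext ω
  simp [newAt, steps_mem_endsAtNewSite_iff]

lemma newAt_subset_preimage_steps {r s : ℕ} (h : r ≤ s) :
    newAt Y s ⊆ steps Y r (s - r) ⁻¹' endsAtNewSite (s - r) := by
  intro ω hω
  rw [mem_preimage, steps_mem_endsAtNewSite_iff, Nat.add_sub_cancel' h]
  exact fun j hj => hω _ (by omega)

lemma measurableSet_newAt_of_le {k r : ℕ} (h : k ≤ r) :
    MeasurableSet[stepsMeasurableSpace Y (Iio r)] (newAt Y k) := by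
  rw [newAt_eq_preimage_steps]
  exact measurable_steps (fun i hi => by simp only [mem_Iio]; omega) .of_discrete

lemma rangeRW_zero (ω : Ω) : rangeRW Y 0 ω = 1 := by
  simp [rangeRW]

lemma rangeRW_succ (n : ℕ) (ω : Ω) :
    rangeRW Y (n + 1) ω = rangeRW Y n ω + (newAt Y (n + 1)).indicator 1 ω := by
  have hmem : walk Y (n + 1) ω ∈ (Finset.range (n + 1)).image (walk Y · ω) ↔
      ω ∉ newAt Y (n + 1) := by
    simp [newAt]
  unfold rangeRW
  rw [Finset.range_add_one (n := n + 1), Finset.image_insert]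
  by_cases h : ω ∈ newAt Y (n + 1)
  · rw [Finset.card_insert_of_notMem (hmem.not.2 (not_not.2 h)), indicator_of_mem h, Pi.one_apply]
  · rw [Finset.insert_eq_of_mem (hmem.2 h), indicator_of_notMem h, add_zero]

lemma rangeRW_eq_sum (n : ℕ) (ω : Ω) :
    (rangeRW Y n ω : ℝ≥0∞) = ∑ k ∈ Finset.range (n + 1), (newAt Y k).indicator 1 ω := by
  induction n with
  | zero => simp [rangeRW_zero, newAt_zero]
  | succ n ih =>
    rw [Finset.sum_range_succ, ← ih, rangeRW_succ, Nat.cast_add]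
    by_cases h : ω ∈ newAt Y (n + 1) <;> simp [h]

lemma measurableSet_newAt (hY : ∀ i, Measurable (Y i)) (k : ℕ) : MeasurableSet (newAt Y k) :=
  stepsMeasurableSpace_le hY _ _ (measurableSet_newAt_of_le le_rfl)

lemma lintegral_rangeRW (hY : ∀ i, Measurable (Y i)) (n : ℕ) :
    ∫⁻ ω, (rangeRW Y n ω : ℝ≥0∞) ∂P = ∑ k ∈ Finset.range (n + 1), P (newAt Y k) := by
  simp_rw [rangeRW_eq_sum]
  rw [lintegral_finsetSum _ fun k _ => measurable_one.indicator (measurableSet_newAt hY k)]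
  exact Finset.sum_congr rfl fun k _ => lintegral_indicator_one (measurableSet_newAt hY k)

-- The number of chains `t₀ ≤ ⋯ ≤ t_q = s` of times at which the walk visits a new site.
def newChainCount (Y : ℕ → Ω → (Fin d → ℤ)) : ℕ → ℕ → Ω → ℝ≥0∞
  | 0, s => (newAt Y s).indicator 1
  | q + 1, s => (newAt Y s).indicator fun ω => ∑ r ∈ Finset.range (s + 1), newChainCount Y q r ω

lemma measurable_newChainCount_of_le (q : ℕ) {s r : ℕ} (h : s ≤ r) :
    Measurable[stepsMeasurableSpace Y (Iio r)] (newChainCount Y q s) := by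
  induction q generalizing s with
  | zero => exact measurable_const.indicator (measurableSet_newAt_of_le h)
  | succ q ih =>
    exact (Finset.measurable_sum _ fun r' hr' =>
      ih (le_trans (Nat.lt_succ_iff.1 (Finset.mem_range.1 hr')) h)).indicator
      (measurableSet_newAt_of_le h)

lemma measurable_newChainCount (hY : ∀ i, Measurable (Y i)) (q s : ℕ) :
    Measurable (newChainCount Y q s) :=
  (measurable_newChainCount_of_le q le_rfl).mono (stepsMeasurableSpace_le hY _) le_rfl

lemma rangeRW_pow_succ_le (q t : ℕ) (ω : Ω) :
    (rangeRW Y t ω : ℝ≥0∞) ^ (q + 1) ≤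
      (q + 1) * ∑ s ∈ Finset.range (t + 1),
        (newAt Y s).indicator (fun ω => (rangeRW Y s ω : ℝ≥0∞) ^ q) ω := by
  induction t with
  | zero => simp [rangeRW_zero, newAt_zero]
  | succ t ih =>
    rw [Finset.sum_range_succ, mul_add, rangeRW_succ]
    by_cases h : ω ∈ newAt Y (t + 1)
    · rw [indicator_of_mem h, indicator_of_mem h, rangeRW_succ, indicator_of_mem h, Pi.one_apply]
      calc ((rangeRW Y t ω + 1 : ℕ) : ℝ≥0∞) ^ (q + 1)
          ≤ (rangeRW Y t ω : ℝ≥0∞) ^ (q + 1) + (q + 1) * ((rangeRW Y t ω + 1 : ℕ) : ℝ≥0∞) ^ q := by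
            exact_mod_cast Nat.succ_pow_succ_le (rangeRW Y t ω) q
        _ ≤ _ := by gcongr
    · simpa [indicator_of_notMem h] using ih

lemma rangeRW_pow_le (q t : ℕ) (ω : Ω) :
    (rangeRW Y t ω : ℝ≥0∞) ^ (q + 1) ≤
      (q + 1)! * ∑ s ∈ Finset.range (t + 1), newChainCount Y q s ω := by
  induction q generalizing t with
  | zero => simp [newChainCount, rangeRW_eq_sum]
  | succ q ih =>
    calc (rangeRW Y t ω : ℝ≥0∞) ^ (q + 2)
        ≤ (q + 2) * ∑ s ∈ Finset.range (t + 1),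
            (newAt Y s).indicator (fun ω => (rangeRW Y s ω : ℝ≥0∞) ^ (q + 1)) ω :=
          mod_cast rangeRW_pow_succ_le (q + 1) t ω
      _ ≤ (q + 2) * ∑ s ∈ Finset.range (t + 1), (newAt Y s).indicator
            (fun ω => (q + 1)! * ∑ r ∈ Finset.range (s + 1), newChainCount Y q r ω) ω := by
          gcongr with s
          exact ih s
      _ = (q + 2)! * ∑ s ∈ Finset.range (t + 1), newChainCount Y (q + 1) s ω := by
          simp only [newChainCount, indicator_mul_right, ← Finset.mul_sum,
            Nat.factorial_succ (q + 1), Nat.cast_mul, mul_assoc]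
          push_cast
          ring

lemma lintegral_indicator_newAt_le (hY : ∀ i, Measurable (Y i)) (hInd : iIndepFun Y P)
    (hId : ∀ i, IdentDistrib (Y i) (Y 0) P P) {r s : ℕ} (h : r ≤ s) {F : Ω → ℝ≥0∞}
    (hF : Measurable[stepsMeasurableSpace Y (Iio r)] F) :
    ∫⁻ ω, (newAt Y s).indicator F ω ∂P ≤ P (newAt Y (s - r)) * ∫⁻ ω, F ω ∂P :=
  calc ∫⁻ ω, (newAt Y s).indicator F ω ∂P
      ≤ ∫⁻ ω, (steps Y r (s - r) ⁻¹' endsAtNewSite (s - r)).indicator F ω ∂P :=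
        lintegral_mono fun ω =>
          indicator_le_indicator_of_subset (newAt_subset_preimage_steps h) (fun _ => zero_le) ω
    _ = P (newAt Y (s - r)) * ∫⁻ ω, F ω ∂P := by
        rw [lintegral_indicator_steps_preimage hY hInd hId hF .of_discrete,
          newAt_eq_preimage_steps]

lemma sum_lintegral_newChainCount_le (hY : ∀ i, Measurable (Y i)) (hInd : iIndepFun Y P)
    (hId : ∀ i, IdentDistrib (Y i) (Y 0) P P) (q t : ℕ) :
    ∑ s ∈ Finset.range (t + 1), ∫⁻ ω, newChainCount Y q s ω ∂P ≤
      (∑ k ∈ Finset.range (t + 1), P (newAt Y k)) ^ (q + 1) := by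
  set A := ∑ k ∈ Finset.range (t + 1), P (newAt Y k)
  induction q with
  | zero =>
    simp only [newChainCount, zero_add, pow_one]
    exact (Finset.sum_congr rfl fun s _ => lintegral_indicator_one (measurableSet_newAt hY s)).le
  | succ q ih =>
    calc ∑ s ∈ Finset.range (t + 1), ∫⁻ ω, newChainCount Y (q + 1) s ω ∂P
        = ∑ s ∈ Finset.range (t + 1), ∑ r ∈ Finset.range (s + 1),
            ∫⁻ ω, (newAt Y s).indicator (newChainCount Y q r) ω ∂P := by
          refine Finset.sum_congr rfl fun s _ => ?_
          rw [← lintegral_finsetSum _ fun r _ =>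
            (measurable_newChainCount hY q r).indicator (measurableSet_newAt hY s)]
          refine lintegral_congr fun ω => ?_
          by_cases h : ω ∈ newAt Y s <;> simp [newChainCount, h]
      _ ≤ ∑ s ∈ Finset.range (t + 1), ∑ r ∈ Finset.range (s + 1),
            P (newAt Y (s - r)) * ∫⁻ ω, newChainCount Y q r ω ∂P := by
          gcongr with s _ r hr
          exact lintegral_indicator_newAt_le hY hInd hId
            (Nat.lt_succ_iff.1 (Finset.mem_range.1 hr)) (measurable_newChainCount_of_le q le_rfl)
      _ = ∑ r ∈ Finset.range (t + 1), (∑ s ∈ Finset.Ico r (t + 1), P (newAt Y (s - r))) *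
            ∫⁻ ω, newChainCount Y q r ω ∂P := by
          simp_rw [Finset.range_eq_Ico, Finset.sum_mul]
          exact (Finset.sum_Ico_Ico_comm 0 (t + 1) _).symm
      _ ≤ ∑ r ∈ Finset.range (t + 1), A * ∫⁻ ω, newChainCount Y q r ω ∂P := by
          gcongr with r
          rw [Finset.sum_Ico_eq_sum_range]
          simp only [Nat.add_sub_cancel_left]
          exact Finset.sum_le_sum_of_subset (Finset.range_subset_range.2 (Nat.sub_le _ _))
      _ ≤ A * A ^ (q + 1) := by
          rw [← Finset.mul_sum]
          gcongr
      _ = A ^ (q + 2) := by ring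

lemma lintegral_rangeRW_pow_le (hY : ∀ i, Measurable (Y i)) (hInd : iIndepFun Y P)
    (hId : ∀ i, IdentDistrib (Y i) (Y 0) P P) (n q : ℕ) :
    ∫⁻ ω, (rangeRW Y n ω : ℝ≥0∞) ^ q ∂P ≤ q ! * (∫⁻ ω, (rangeRW Y n ω : ℝ≥0∞) ∂P) ^ q := by
  rcases q with _ | q
  · have := hInd.isProbabilityMeasure
    simp
  calc ∫⁻ ω, (rangeRW Y n ω : ℝ≥0∞) ^ (q + 1) ∂P
      ≤ ∫⁻ ω, (q + 1)! * ∑ s ∈ Finset.range (n + 1), newChainCount Y q s ω ∂P :=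
        lintegral_mono fun ω => rangeRW_pow_le q n ω
    _ = (q + 1)! * ∑ s ∈ Finset.range (n + 1), ∫⁻ ω, newChainCount Y q s ω ∂P := by
        have hD (s : ℕ) := measurable_newChainCount hY q s
        rw [lintegral_const_mul _ (Finset.measurable_sum _ fun s _ => hD s),
          lintegral_finsetSum _ fun s _ => hD s]
    _ ≤ (q + 1)! * (∫⁻ ω, (rangeRW Y n ω : ℝ≥0∞) ∂P) ^ (q + 1) := by
        rw [lintegral_rangeRW hY]
        gcongr
        exact sum_lintegral_newChainCount_le hY hInd hId q n

lemma integral_rangeRW_pow_le (hY : ∀ i, Measurable (Y i)) (hInd : iIndepFun Y P)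
    (hId : ∀ i, IdentDistrib (Y i) (Y 0) P P) (n q : ℕ) :
    ∫ ω, (rangeRW Y n ω : ℝ) ^ q ∂P ≤ q ! * (∫ ω, (rangeRW Y n ω : ℝ) ∂P) ^ q := by
  have := hInd.isProbabilityMeasure
  have hR : Measurable fun ω => (rangeRW Y n ω : ℝ≥0∞) := by
    simp_rw [rangeRW_eq_sum]
    exact Finset.measurable_sum _ fun k _ => measurable_one.indicator (measurableSet_newAt hY k)
  have hfin : ∫⁻ ω, (rangeRW Y n ω : ℝ≥0∞) ∂P ≠ ∞ := by
    rw [lintegral_rangeRW hY]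
    exact ENNReal.sum_ne_top.2 fun k _ => measure_ne_top P _
  have hpow : ∫ ω, (rangeRW Y n ω : ℝ) ^ q ∂P = (∫⁻ ω, (rangeRW Y n ω : ℝ≥0∞) ^ q ∂P).toReal := by
    rw [← integral_toReal (hR.pow_const q).aemeasurable (ae_of_all _ fun ω => by simp)]
    simp
  have hone : ∫ ω, (rangeRW Y n ω : ℝ) ∂P = (∫⁻ ω, (rangeRW Y n ω : ℝ≥0∞) ∂P).toReal := by
    rw [← integral_toReal hR.aemeasurable (ae_of_all _ fun ω => by simp)]
    simp
  rw [hpow, hone, ← ENNReal.toReal_pow, ← ENNReal.toReal_natCast, ← ENNReal.toReal_mul]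
  exact ENNReal.toReal_mono (by finiteness) (lintegral_rangeRW_pow_le hY hInd hId n q)

end Walk

end RandomWalk

theorem moment_range_le_general
    {d : ℕ} (p : ℕ) :
    ∃ C : ℝ, 0 < C ∧
      ∀ (Ω : Type) (_ : MeasurableSpace Ω) (P : Measure Ω), IsProbabilityMeasure P →
        ∀ Y : ℕ → Ω → (Fin d → ℤ), (∀ i, Measurable (Y i)) →
          ProbabilityTheory.iIndepFun Y P →
          (∀ i, ProbabilityTheory.IdentDistrib (Y i) (Y 0) P P) →
          ∀ n : ℕ, 1 ≤ n →
            (∫ ω, (rangeRW Y n ω : ℝ) ^ (2 * p) ∂P)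
              ≤ C * (∫ ω, (rangeRW Y n ω : ℝ) ∂P) ^ (2 * p) :=
  ⟨(2 * p)!, by positivity, fun _ _ _ _ _ hY hInd hId n _ =>
    RandomWalk.integral_rangeRW_pow_le hY hInd hId n (2 * p)⟩

/-- **Moment bound for the range of an arbitrary random walk**: for every `p ≥ 1` there is
a constant `C_p > 0`, depending only on `p`, such that `E[R_n^{2p}] ≤ C_p (E[R_n])^{2p}`
for all `n ≥ 1`. -/
theorem moment_range_le
    {d : ℕ} (hd : 1 ≤ d) (p : ℕ) (hp : 1 ≤ p) :
    ∃ C : ℝ, 0 < C ∧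
      ∀ (Ω : Type) (_ : MeasurableSpace Ω) (P : Measure Ω), IsProbabilityMeasure P →
        ∀ Y : ℕ → Ω → (Fin d → ℤ), (∀ i, Measurable (Y i)) →
          ProbabilityTheory.iIndepFun Y P →
          (∀ i, ProbabilityTheory.IdentDistrib (Y i) (Y 0) P P) →
          ∀ n : ℕ, 1 ≤ n →
            (∫ ω, (rangeRW Y n ω : ℝ) ^ (2 * p) ∂P)
              ≤ C * (∫ ω, (rangeRW Y n ω : ℝ) ∂P) ^ (2 * p) :=
  moment_range_le_general p

end
end

section
/- Let t > 0, β ∈ (0,1], and let g : [0,t] → ℝ be β-Hölder continuous, i.e. there is C > 0 with |g(u) − g(v)| ≤ C|u − v|^β for all u, v ∈ [0,t]. Let χ ∈ (−β, 0). Then: (a) the function s ↦ (g(t) − g(t−s)) · s^{χ−1} is Lebesgue integrable on (0,t); (b) ε^χ · (g(t) − g(t−ε)) → 0 as ε → 0⁺; and consequently (c) the limit lim_{ε→0⁺} [ t^χ g(t) − ε^χ (g(t) − g(t−ε)) − χ ∫_ε^t (g(t) − g(t−s)) s^{χ−1} ds ] exists and equals t^χ g(t) − χ ∫_0^t (g(t)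 − g(t−s)) s^{χ−1} ds. -/
open MeasureTheory Filter Topology Set

noncomputable section

/-! On `(0, t]` the Hölder bound gives `|g t - g (t - s)| ≤ C s^β`, so the integrand of (a) is
dominated by `C s^(β + χ - 1)`, integrable at `0` since `β + χ > 0`, and the boundary term of (b)
by `C ε^(β + χ)`. Then (c) is (b) together with the continuity of `ε ↦ ∫_ε^t` of an integrable
function. -/

theorem continuousOn_of_abs_sub_le_mul_rpow {g : ℝ → ℝ} {s : Set ℝ} {C β : ℝ}
    (hβ : 0 < β) (hg : ∀ u ∈ s, ∀ v ∈ s, |g u - g v| ≤ C * |u - v| ^ β) : ContinuousOn g s := by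
  intro x hx
  have hmodulus : Tendsto (fun y => C * |y - x| ^ β) (𝓝[s] x) (𝓝 0) := by
    have hcont : Continuous fun y => C * |y - x| ^ β :=
      continuous_const.mul ((continuous_id.sub continuous_const).abs.rpow_const
        fun _ => Or.inr hβ.le)
    simpa [Real.zero_rpow hβ.ne'] using (hcont.tendsto x).mono_left nhdsWithin_le_nhds
  rw [ContinuousWithinAt, tendsto_iff_norm_sub_tendsto_zero]
  refine squeeze_zero_norm' (eventually_nhdsWithin_of_forall fun y hy => ?_) hmodulus
  simpa using hg y hy x hx

theorem abs_mul_rpow_le_mul_rpow_add {a C s β χ : ℝ} (hs : 0 < s) (ha : |a| ≤ C * s ^ β) :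
    |a * s ^ χ| ≤ C * s ^ (β + χ) := by
  rw [abs_mul, abs_of_pos (Real.rpow_pos_of_pos hs χ), Real.rpow_add hs, ← mul_assoc]
  exact mul_le_mul_of_nonneg_right ha (Real.rpow_nonneg hs.le χ)

theorem integrableOn_Ioc_of_abs_le_mul_rpow {f : ℝ → ℝ} {t C r : ℝ} (hr : -1 < r)
    (hf : AEStronglyMeasurable f (volume.restrict (Ioc 0 t)))
    (hbound : ∀ s ∈ Ioc 0 t, |f s| ≤ C * s ^ r) : IntegrableOn f (Ioc 0 t) := by
  have hdom : IntegrableOn (fun s => C * s ^ r) (Ioc 0 t) :=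
    ((intervalIntegral.intervalIntegrable_rpow' hr).const_mul C).1
  refine hdom.mono' hf ?_
  filter_upwards [ae_restrict_mem measurableSet_Ioc] with s hs using hbound s hs

theorem tendsto_nhdsGT_zero_of_abs_le_mul_rpow {u : ℝ → ℝ} {C p : ℝ} (hp : 0 < p)
    (hu : ∀ᶠ ε in 𝓝[>] 0, |u ε| ≤ C * ε ^ p) : Tendsto u (𝓝[>] 0) (𝓝 0) := by
  have hpow : Tendsto (fun ε : ℝ => C * ε ^ p) (𝓝[>] 0) (𝓝 0) := by
    have := ((Real.continuousAt_rpow_const 0 p (Or.inr hp.le)).tendsto.const_mul C)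
    simpa [Real.zero_rpow hp.ne'] using this.mono_left nhdsWithin_le_nhds
  exact squeeze_zero_norm' hu hpow

theorem tendsto_setIntegral_Ioc_nhdsGT {E : Type*} [NormedAddCommGroup E] [NormedSpace ℝ E]
    {f : ℝ → E} {a b : ℝ} (hab : a < b) (hf : IntegrableOn f (Ioc a b)) :
    Tendsto (fun ε => ∫ s in Ioc ε b, f s) (𝓝[>] a) (𝓝 (∫ s in Ioc a b, f s)) := by
  have hIcc : IntegrableOn f (uIcc a b) := by
    rwa [uIcc_of_le hab.le, integrableOn_Icc_iff_integrableOn_Ioc]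
  have hprim : ContinuousWithinAt (fun ε => ∫ s in ε..b, f s) (Ioi a) a :=
    (intervalIntegral.continuousOn_primitive_interval_left hIcc a
      left_mem_uIcc).mono_of_mem_nhdsWithin (by rw [uIcc_of_le hab.le]; exact Icc_mem_nhdsGT hab)
  rw [ContinuousWithinAt, intervalIntegral.integral_of_le hab.le] at hprim
  refine hprim.congr' ?_
  filter_upwards [Ioc_mem_nhdsGT hab] with ε hε using intervalIntegral.integral_of_le hε.2

theorem singular_young_integral_of_holder_general
    (t β C χ : ℝ) (ht : 0 < t) (hβ₀ : 0 < β)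
    (g : ℝ → ℝ)
    (hg : ∀ u ∈ Set.Icc 0 t, ∀ v ∈ Set.Icc 0 t, |g u - g v| ≤ C * |u - v| ^ β)
    (hχ₀ : -β < χ) :
    IntegrableOn (fun s => (g t - g (t - s)) * s ^ (χ - 1)) (Set.Ioc 0 t) volume ∧
    Tendsto (fun ε => ε ^ χ * (g t - g (t - ε))) (nhdsWithin 0 (Set.Ioi 0)) (nhds 0) ∧
    Tendsto
      (fun ε => t ^ χ * g t - ε ^ χ * (g t - g (t - ε)) -
        χ * ∫ s in Set.Ioc ε t, (g t - g (t - s)) * s ^ (χ - 1))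
      (nhdsWithin 0 (Set.Ioi 0))
      (nhds (t ^ χ * g t - χ * ∫ s in Set.Ioc 0 t, (g t - g (t - s)) * s ^ (χ - 1))) := by
  have hincrement : ∀ s ∈ Ioc 0 t, |g t - g (t - s)| ≤ C * s ^ β := fun s hs => by
    simpa [abs_of_pos hs.1] using
      hg t ⟨ht.le, le_rfl⟩ (t - s) ⟨by linarith [hs.2], by linarith [hs.1]⟩
  have hcont : ContinuousOn (fun s => (g t - g (t - s)) * s ^ (χ - 1)) (Ioc 0 t) := by
    refine (continuousOn_const.sub ((continuousOn_of_abs_sub_le_mul_rpow hβ₀ hg).comp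
      (continuous_sub_left t).continuousOn fun s hs => ?_)).mul
      fun s hs => (Real.continuousAt_rpow_const s _ (Or.inl hs.1.ne')).continuousWithinAt
    exact ⟨by linarith [hs.2], by linarith [hs.1]⟩
  have ha : IntegrableOn (fun s => (g t - g (t - s)) * s ^ (χ - 1)) (Ioc 0 t) :=
    integrableOn_Ioc_of_abs_le_mul_rpow (r := β + (χ - 1)) (by linarith)
      (hcont.aestronglyMeasurable measurableSet_Ioc)
      fun s hs => abs_mul_rpow_le_mul_rpow_add hs.1 (hincrement s hs)
  have hb : Tendsto (fun ε => ε ^ χ * (g t - g (t - ε))) (𝓝[>] 0) (𝓝 0) := by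
    refine tendsto_nhdsGT_zero_of_abs_le_mul_rpow (C := C) (by linarith : 0 < β + χ) ?_
    filter_upwards [Ioc_mem_nhdsGT ht] with ε hε
    rw [mul_comm]
    exact abs_mul_rpow_le_mul_rpow_add hε.1 (hincrement ε hε)
  refine ⟨ha, hb, ?_⟩
  simpa using (tendsto_const_nhds.sub hb).sub ((tendsto_setIntegral_Ioc_nhdsGT ht ha).const_mul χ)

/-- **Definition of the singular Young integral `∫_0^t (t-s)^χ dg(s)` for Hölder `g` and
`χ ∈ (-β, 0)`** (Appendix A): if `g` is `β`-Hölder on `[0,t]` and `-β < χ < 0`, then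
(a) `s ↦ (g(t) - g(t-s)) s^{χ-1}` is Lebesgue integrable on `(0,t)`;
(b) `ε^χ (g(t) - g(t-ε)) → 0` as `ε → 0⁺`;
(c) `t^χ g(t) - ε^χ (g(t) - g(t-ε)) - χ ∫_ε^t (g(t) - g(t-s)) s^{χ-1} ds` converges, as
`ε → 0⁺`, to `t^χ g(t) - χ ∫_0^t (g(t) - g(t-s)) s^{χ-1} ds`. -/
theorem singular_young_integral_of_holder
    (t β C χ : ℝ) (ht : 0 < t) (hβ₀ : 0 < β) (hβ₁ : β ≤ 1) (hC : 0 < C)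
    (g : ℝ → ℝ)
    (hg : ∀ u ∈ Set.Icc 0 t, ∀ v ∈ Set.Icc 0 t, |g u - g v| ≤ C * |u - v| ^ β)
    (hχ₀ : -β < χ) (hχ₁ : χ < 0) :
    IntegrableOn (fun s => (g t - g (t - s)) * s ^ (χ - 1)) (Set.Ioc 0 t) volume ∧
    Tendsto (fun ε => ε ^ χ * (g t - g (t - ε))) (nhdsWithin 0 (Set.Ioi 0)) (nhds 0) ∧
    Tendsto
      (fun ε => t ^ χ * g t - ε ^ χ * (g t - g (t - ε)) -
        χ * ∫ s in Set.Ioc ε t, (g t - g (t - s)) * s ^ (χ - 1))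
      (nhdsWithin 0 (Set.Ioi 0))
      (nhds (t ^ χ * g t - χ * ∫ s in Set.Ioc 0 t, (g t - g (t - s)) * s ^ (χ - 1))) :=
  singular_young_integral_of_holder_general t β C χ ht hβ₀ g hg hχ₀

end
end
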